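/- arXiv:0907.5527 — 2 statements merged into one kernel-verified Lean document; each statement's English description precedes it below -/
import Mathlib

section
/- Let C be a Δ-linear interpretation for a finite signature F and let K be the maximum of all coefficients a_{f,i}, b_{f,i}, c_f, d_f occurring in C. Then for every ground term t over F and every real Δ > 0, [t]_Δ ≤ (K+2)^{|t|}·(Δ + 1). -/
/-- First-order terms over a signature `F` (with arity function `ar`) and variables `V`;
ground terms are terms over the empty set of variables. -/
inductive Tm (F : Type) (ar : F → ℕ) (V : Type) : Type where
  | var : V → Tm F ar V
  | fn : (f : F) → (Fin (ar f) → Tm F ar V) → Tm F ar V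

namespace Tm

variable {F : Type} {ar : F → ℕ} {V : Type}

/-- The size of a term. -/
def size : Tm F ar V → ℕ
  | var _ => 1
  | fn _ ts => 1 + ∑ i, (ts i).size

end Tm

/-- A Δ-linear interpretation for a signature `F` with arity function `ar`. -/
structure DeltaLin (F : Type) (ar : F → ℕ) where
  a : (f : F) → Fin (ar f) → ℕ
  b : (f : F) → Fin (ar f) → ℕ
  c : F → ℕ
  d : F → ℕ
  pos : ∀ f i, 1 ≤ a f i + b f i

namespace DeltaLin

variable {F : Type} {ar : F → ℕ}

/-- The interpretation function
`f[Δ](z₁,…,zₙ) = Σᵢ a_{f,i}·zᵢ + Σᵢ b_{f,i}·zᵢ·Δ + c_f·Δ + d_f`. -/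
noncomputable def fA (C : DeltaLin F ar) (f : F) (Δ : ℝ) (z : Fin (ar f) → ℝ) : ℝ :=
  (∑ i, (C.a f i : ℝ) * z i) + (∑ i, (C.b f i : ℝ) * z i * Δ) +
    (C.c f : ℝ) * Δ + (C.d f : ℝ)

/-- The parameter function `f^i(Δ) = Δ/(a_{f,i} + b_{f,i}·Δ)`. -/
noncomputable def par (C : DeltaLin F ar) (f : F) (i : Fin (ar f)) (Δ : ℝ) : ℝ :=
  Δ / ((C.a f i : ℝ) + (C.b f i : ℝ) * Δ)

/-- Context-dependent evaluation of ground terms: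
`[f(t₁,…,tₙ)]_Δ = f[Δ]([t₁]_{f¹(Δ)},…,[tₙ]_{fⁿ(Δ)})`. -/
noncomputable def evalG (C : DeltaLin F ar) : Tm F ar Empty → ℝ → ℝ
  | .var x, _ => x.elim
  | .fn f ts, Δ => C.fA f Δ fun i => evalG C (ts i) (C.par f i Δ)

end DeltaLin

/-!
Induction on `t` proves the sharper bound `[t]_Δ ≤ ((K+2)^{|t|} - 1)·(Δ + 1)`. The parameter
function is built so that `(a + bΔ)·(Δ/(a + bΔ) + 1) = Δ + a + bΔ ≤ (K+1)(Δ + 1)`, so each argument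
of `f(t₁,…,tₙ)` contributes at most `(K+1)((K+2)^{|tᵢ|} - 1)(Δ + 1)`, and `c_f Δ + d_f ≤ K(Δ + 1)`.
The elementary inequality `1 + Σ uᵢ ≤ Π (1 + uᵢ)` for `uᵢ = (K+2)^{|tᵢ|} - 1` closes the induction.
-/

open Finset

theorem Finset.one_add_sum_le_prod_one_add {ι R : Type*} [CommSemiring R] [PartialOrder R]
    [IsOrderedRing R] (s : Finset ι) {u : ι → R} (hu : ∀ i ∈ s, 0 ≤ u i) :
    1 + ∑ i ∈ s, u i ≤ ∏ i ∈ s, (1 + u i) := by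
  induction s using Finset.cons_induction with
  | empty => simp
  | cons j s _ ih =>
    rw [sum_cons, prod_cons]
    have hu_j : 0 ≤ u j := hu j (mem_cons_self j s)
    have hu_s : ∀ i ∈ s, 0 ≤ u i := fun i hi => hu i (mem_cons_of_mem hi)
    calc 1 + (u j + ∑ i ∈ s, u i)
        ≤ (1 + u j) * (1 + ∑ i ∈ s, u i) := by
          have : 0 ≤ u j * ∑ i ∈ s, u i := mul_nonneg hu_j (sum_nonneg hu_s)
          calc 1 + (u j + ∑ i ∈ s, u i) ≤ 1 + (u j + ∑ i ∈ s, u i) + u j * ∑ i ∈ s, u i :=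
                le_add_of_nonneg_right this
            _ = (1 + u j) * (1 + ∑ i ∈ s, u i) := by ring
      _ ≤ (1 + u j) * ∏ i ∈ s, (1 + u i) :=
          mul_le_mul_of_nonneg_left (ih hu_s) (add_nonneg zero_le_one hu_j)

namespace DeltaLin

variable {F : Type} {ar : F → ℕ} (C : DeltaLin F ar)

theorem coeff_add_mul_pos (f : F) (i : Fin (ar f)) {Δ : ℝ} (hΔ : 0 < Δ) :
    0 < (C.a f i : ℝ) + C.b f i * Δ := by
  rcases Nat.eq_zero_or_pos (C.a f i) with ha | ha
  · have hb : 0 < C.b f i := by have := C.pos f i; omega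
    rw [ha, Nat.cast_zero, zero_add]
    exact mul_pos (Nat.cast_pos.mpr hb) hΔ
  · exact add_pos_of_pos_of_nonneg (Nat.cast_pos.mpr ha) (by positivity)

theorem par_pos (f : F) (i : Fin (ar f)) {Δ : ℝ} (hΔ : 0 < Δ) : 0 < C.par f i Δ :=
  div_pos hΔ (C.coeff_add_mul_pos f i hΔ)

theorem coeff_add_mul_mul_par_add_one (f : F) (i : Fin (ar f)) {Δ : ℝ} (hΔ : 0 < Δ) :
    ((C.a f i : ℝ) + C.b f i * Δ) * (C.par f i Δ + 1) = Δ + (C.a f i + C.b f i * Δ) := by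
  rw [par, mul_add, mul_one, mul_div_cancel₀ _ (C.coeff_add_mul_pos f i hΔ).ne']

theorem coeff_add_mul_mul_le {f : F} {i : Fin (ar f)} {K : ℕ} (ha : C.a f i ≤ K)
    (hb : C.b f i ≤ K) {Δ y e : ℝ} (hΔ : 0 < Δ) (hy : 0 ≤ y) (he : e ≤ y * (C.par f i Δ + 1)) :
    ((C.a f i : ℝ) + C.b f i * Δ) * e ≤ (K + 1) * y * (Δ + 1) := by
  have hw : Δ + ((C.a f i : ℝ) + C.b f i * Δ) ≤ (K + 1) * (Δ + 1) := by
    have : (C.a f i : ℝ) + C.b f i * Δ ≤ K + K * Δ := by gcongr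
    linarith
  calc ((C.a f i : ℝ) + C.b f i * Δ) * e
      ≤ ((C.a f i : ℝ) + C.b f i * Δ) * (y * (C.par f i Δ + 1)) :=
        mul_le_mul_of_nonneg_left he (C.coeff_add_mul_pos f i hΔ).le
    _ = y * (Δ + ((C.a f i : ℝ) + C.b f i * Δ)) := by
        rw [← C.coeff_add_mul_mul_par_add_one f i hΔ]; ring
    _ ≤ y * ((K + 1) * (Δ + 1)) := mul_le_mul_of_nonneg_left hw hy
    _ = (K + 1) * y * (Δ + 1) := by ring

theorem evalG_fn (f : F) (ts : Fin (ar f) → Tm F ar Empty) (Δ : ℝ) :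
    C.evalG (.fn f ts) Δ =
      (∑ i, ((C.a f i : ℝ) + C.b f i * Δ) * C.evalG (ts i) (C.par f i Δ)) + C.c f * Δ + C.d f := by
  rw [evalG, fA, ← sum_add_distrib]
  congr 2
  exact sum_congr rfl fun i _ => by ring

theorem evalG_le_of_coeff_le {K : ℕ} (ha : ∀ f i, C.a f i ≤ K) (hb : ∀ f i, C.b f i ≤ K)
    (hc : ∀ f, C.c f ≤ K) (hd : ∀ f, C.d f ≤ K) (t : Tm F ar Empty) {Δ : ℝ} (hΔ : 0 < Δ) :
    C.evalG t Δ ≤ (((K : ℝ) + 2) ^ t.size - 1) * (Δ + 1) := by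
  induction t generalizing Δ with
  | var x => exact x.elim
  | fn f ts ih =>
    set X : ℝ := (K : ℝ) + 2
    set u : Fin (ar f) → ℝ := fun i => X ^ (ts i).size - 1
    have hKX : (K : ℝ) + 1 ≤ X := by simp only [X]; linarith
    have hX : 1 ≤ X := le_trans (by simp) hKX
    have hu : ∀ i, 0 ≤ u i := fun i => sub_nonneg.mpr (one_le_pow₀ hX)
    have hchild : ∀ i, ((C.a f i : ℝ) + C.b f i * Δ) * C.evalG (ts i) (C.par f i Δ) ≤
        (K + 1) * u i * (Δ + 1) := fun i =>
      C.coeff_add_mul_mul_le (ha f i) (hb f i) hΔ (hu i) (ih i (C.par_pos f i hΔ))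
    have hcd : (C.c f : ℝ) * Δ + C.d f ≤ K * (Δ + 1) := by
      have : (C.c f : ℝ) * Δ + C.d f ≤ K * Δ + K := by
        gcongr <;> simp [hc, hd]
      linarith
    have hprod : 1 + ∑ i, u i ≤ X ^ ∑ i, (ts i).size := by
      calc 1 + ∑ i, u i ≤ ∏ i, (1 + u i) := one_add_sum_le_prod_one_add _ fun i _ => hu i
        _ = X ^ ∑ i, (ts i).size := by simp only [u, add_sub_cancel, prod_pow_eq_pow_sum]
    calc C.evalG (.fn f ts) Δ
        ≤ (∑ i, (K + 1) * u i * (Δ + 1)) + K * (Δ + 1) := by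
          rw [evalG_fn, add_assoc]
          exact add_le_add (sum_le_sum fun i _ => hchild i) hcd
      _ = ((K + 1) * (1 + ∑ i, u i) - 1) * (Δ + 1) := by
          rw [← sum_mul, ← mul_sum]; ring
      _ ≤ (X * X ^ ∑ i, (ts i).size - 1) * (Δ + 1) := by
          refine mul_le_mul_of_nonneg_right (sub_le_sub_right ?_ 1) (by linarith)
          exact mul_le_mul hKX hprod (add_nonneg zero_le_one (sum_nonneg fun i _ => hu i))
            (by linarith)
      _ = (X ^ (Tm.fn f ts).size - 1) * (Δ + 1) := by rw [Tm.size, pow_add, pow_one]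

end DeltaLin

/-- For a Δ-linear interpretation `C` over a finite signature, with
`K` the maximum of all coefficients `a_{f,i}, b_{f,i}, c_f, d_f`, every ground term `t`
and every `Δ > 0` satisfy `[t]_Δ ≤ (K+2)^{|t|}·(Δ + 1)`. -/
theorem deltaLin_eval_bound {F : Type} [Fintype F] {ar : F → ℕ}
    (C : DeltaLin F ar) (K : ℕ)
    (hK : K = (Finset.univ.sup fun f => Finset.univ.sup fun i => C.a f i) ⊔
              (Finset.univ.sup fun f => Finset.univ.sup fun i => C.b f i) ⊔
              (Finset.univ.sup C.c) ⊔ (Finset.univ.sup C.d)) :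
    ∀ (t : Tm F ar Empty) (Δ : ℝ), 0 < Δ →
      C.evalG t Δ ≤ ((K : ℝ) + 2) ^ (Tm.size t) * (Δ + 1) := by
  have ha : ∀ f i, C.a f i ≤ K := fun f i => hK ▸ le_sup_of_le_left (le_sup_of_le_left
    (le_sup_of_le_left (le_sup_of_le (mem_univ f) (le_sup (mem_univ i)))))
  have hb : ∀ f i, C.b f i ≤ K := fun f i => hK ▸ le_sup_of_le_left (le_sup_of_le_left
    (le_sup_of_le_right (le_sup_of_le (mem_univ f) (le_sup (mem_univ i)))))
  have hc : ∀ f, C.c f ≤ K := fun f => hK ▸ le_sup_of_le_left (le_sup_of_le_right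
    (le_sup (mem_univ f)))
  have hd : ∀ f, C.d f ≤ K := fun f => hK ▸ le_sup_of_le_right (le_sup (mem_univ f))
  intro t Δ hΔ
  refine (C.evalG_le_of_coeff_le ha hb hc hd t hΔ).trans ?_
  exact mul_le_mul_of_nonneg_right (sub_le_self _ zero_le_one) (by linarith)
end

section
/- Let R and S be finite TRSs over a common finite signature F, let A be a strongly linear interpretation for F such that for every rule l → r ∈ S and every assignment α : V → ℕ the value of l under α is strictly greater than the value of r under α, and assume R is non-duplicating. Define →_{R/S} := →*_S ∘ →_R ∘ →*_S. Then for every term t that is terminating with respect to →_{R∪S}: if every →_{R/S}-derivation starting from t has length at most N, then every →_{R∪S}-derivation starting from t has length at most (1 + WG(A,R))·N + M_A·|t|. -/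
namespace Tm

variable {F : Type} {ar : F → ℕ} {V : Type}

/-- Number of occurrences of the variable `x` in a term. -/
def count [DecidableEq V] (x : V) : Tm F ar V → ℕ
  | var y => if y = x then 1 else 0
  | fn _ ts => ∑ i, (ts i).count x

/-- Application of a substitution to a term. -/
def subst (σ : V → Tm F ar V) : Tm F ar V → Tm F ar V
  | var x => σ x
  | fn f ts => fn f fun i => (ts i).subst σ

/-- Evaluation of a term in the strongly linear interpretation determined by the
constants `c : F → ℕ` (each `f` is interpreted as `x₁ + ⋯ + xₙ + c f`), under the
assignment `α` for the variables. -/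
def evalSLI (c : F → ℕ) (α : V → ℕ) : Tm F ar V → ℕ
  | var x => α x
  | fn f ts => (∑ i, evalSLI c α (ts i)) + c f

end Tm

/-- `R` is a term rewrite system: left-hand sides are not variables and every variable
of a right-hand side occurs in the corresponding left-hand side. -/
def IsTRS {F : Type} {ar : F → ℕ} (R : Set (Tm F ar ℕ × Tm F ar ℕ)) : Prop :=
  ∀ p ∈ R, (∀ x : ℕ, p.1 ≠ Tm.var x) ∧
    ∀ x : ℕ, 0 < Tm.count x p.2 → 0 < Tm.count x p.1

/-- The rewrite relation of `R`: the closure of the rules under contexts and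
substitutions. -/
inductive Rew {F : Type} {ar : F → ℕ} (R : Set (Tm F ar ℕ × Tm F ar ℕ)) :
    Tm F ar ℕ → Tm F ar ℕ → Prop
  | rule {l r} (σ : ℕ → Tm F ar ℕ) : (l, r) ∈ R → Rew R (l.subst σ) (r.subst σ)
  | congr {f} {ts : Fin (ar f) → Tm F ar ℕ} (i) {t'} :
      Rew R (ts i) t' → Rew R (.fn f ts) (.fn f (Function.update ts i t'))

/-- The relative rewrite relation `→_{R/S} = →*_S ∘ →_R ∘ →*_S`. -/
def RelRew {F : Type} {ar : F → ℕ} (R S : Set (Tm F ar ℕ × Tm F ar ℕ))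
    (s t : Tm F ar ℕ) : Prop :=
  ∃ u v : Tm F ar ℕ, Relation.ReflTransGen (Rew S) s u ∧ Rew R u v ∧
    Relation.ReflTransGen (Rew S) v t

/-- A `ρ`-derivation of length `n`: `d 0 → d 1 → ⋯ → d n`. -/
def ChainOf {A : Type} (ρ : A → A → Prop) (n : ℕ) (d : ℕ → A) : Prop :=
  ∀ i < n, ρ (d i) (d (i + 1))

/-!
Weight every term by its value `[·]` in `A` under the zero assignment. Since `A` is strongly
linear, `[·]` of an instance `lσ` is `[l]` plus the values of the substituted terms counted
with multiplicity; hence an `S`-step lowers the weight by at least one, and by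
non-duplication an `R`-step raises it by at most `WG(A,R)`. A derivation with `m` steps,
`k` of them `R`-steps, thus satisfies `m - k ≤ [t] + k · WG(A,R)`. Merging every `R`-step
with the `S`-steps that precede it gives an `→_{R/S}`-derivation of length `k ≤ N`, and
`[t] ≤ M_A · |t|`.
-/

namespace Tm

variable {F : Type} {ar : F → ℕ}

def vars : Tm F ar ℕ → Finset ℕ
  | var x => {x}
  | fn _ ts => Finset.univ.biUnion fun i => (ts i).vars

theorem evalSLI_subst (c : F → ℕ) (α : ℕ → ℕ) (σ : ℕ → Tm F ar ℕ) (u : Tm F ar ℕ) :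
    evalSLI c α (u.subst σ) = evalSLI c (fun x => evalSLI c α (σ x)) u := by
  induction u with
  | var x => rfl
  | fn f ts ih => simp [subst, evalSLI, ih]

theorem evalSLI_eq_evalSLI_zero_add_sum (c : F → ℕ) (α : ℕ → ℕ) (u : Tm F ar ℕ)
    {T : Finset ℕ} (hT : u.vars ⊆ T) :
    evalSLI c α u = evalSLI c (fun _ => 0) u + ∑ x ∈ T, u.count x * α x := by
  induction u with
  | var y =>
    have hy : y ∈ T := hT (by simp [vars])
    simp only [evalSLI, count, ite_mul, one_mul, zero_mul, Finset.sum_ite_eq, if_pos hy,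
      zero_add]
  | fn f ts ih =>
    have hsub (i : Fin (ar f)) : (ts i).vars ⊆ T :=
      (Finset.subset_biUnion_of_mem (fun i => (ts i).vars) (Finset.mem_univ i)).trans hT
    simp only [evalSLI, count, Finset.sum_mul]
    rw [Finset.sum_congr rfl fun i _ => ih i (hsub i), Finset.sum_add_distrib,
      Finset.sum_comm]
    omega

theorem evalSLI_le_of_count_le (c : F → ℕ) {l r : Tm F ar ℕ}
    (hcount : ∀ x, r.count x ≤ l.count x) (α : ℕ → ℕ) :
    evalSLI c α r ≤ evalSLI c α l + (evalSLI c (fun _ => 0) r - evalSLI c (fun _ => 0) l) := by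
  rw [evalSLI_eq_evalSLI_zero_add_sum c α r (Finset.subset_union_right (s₁ := l.vars)),
    evalSLI_eq_evalSLI_zero_add_sum c α l (Finset.subset_union_left (s₂ := r.vars))]
  have := Finset.sum_le_sum fun x (_ : x ∈ l.vars ∪ r.vars) =>
    Nat.mul_le_mul_right (α x) (hcount x)
  omega

theorem evalSLI_fn_update_add (c : F → ℕ) (α : ℕ → ℕ) {f : F} (ts : Fin (ar f) → Tm F ar ℕ)
    (i : Fin (ar f)) (t' : Tm F ar ℕ) :
    evalSLI c α (fn f (Function.update ts i t')) + evalSLI c α (ts i) =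
      evalSLI c α (fn f ts) + evalSLI c α t' := by
  have hupd : (fun j => evalSLI c α (Function.update ts i t' j)) =
      Function.update (fun j => evalSLI c α (ts j)) i (evalSLI c α t') :=
    funext (Function.apply_update (fun _ => evalSLI c α) ts i t')
  simp only [evalSLI]
  rw [hupd, Finset.sum_update_of_mem (Finset.mem_univ i),
    Finset.sum_eq_sum_sdiff_singleton_add (Finset.mem_univ i) (fun j => evalSLI c α (ts j))]
  omega

theorem evalSLI_zero_le_mul_size (c : F → ℕ) {M : ℕ} (hM : ∀ f, c f ≤ M) (u : Tm F ar ℕ) :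
    evalSLI c (fun _ => 0) u ≤ M * u.size := by
  induction u with
  | var x => simp [evalSLI]
  | fn f ts ih =>
    calc (∑ i, evalSLI c (fun _ => 0) (ts i)) + c f
        ≤ (∑ i, M * (ts i).size) + M := by gcongr with i; exacts [ih i, hM f]
      _ = M * (1 + ∑ i, (ts i).size) := by rw [← Finset.mul_sum]; ring

end Tm

namespace Rew

variable {F : Type} {ar : F → ℕ}

theorem union_cases {R S : Set (Tm F ar ℕ × Tm F ar ℕ)} {s u : Tm F ar ℕ}
    (h : Rew (R ∪ S) s u) : Rew R s u ∨ Rew S s u := by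
  induction h with
  | rule σ hmem => exact hmem.imp (Rew.rule σ) (Rew.rule σ)
  | congr i _ ih => exact ih.imp (Rew.congr i) (Rew.congr i)

/-- Every argument enters a strongly linear interpretation additively, so the gap between
the two sides of a rule instance survives any context. -/
theorem evalSLI_add_le {R : Set (Tm F ar ℕ × Tm F ar ℕ)} (c : F → ℕ) {a b : ℕ}
    (hR : ∀ p ∈ R, ∀ α, Tm.evalSLI c α p.2 + a ≤ Tm.evalSLI c α p.1 + b)
    {s u : Tm F ar ℕ} (h : Rew R s u) (α : ℕ → ℕ) :
    Tm.evalSLI c α u + a ≤ Tm.evalSLI c α s + b := by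
  induction h generalizing α with
  | rule σ hmem =>
    rw [Tm.evalSLI_subst, Tm.evalSLI_subst]
    exact hR _ hmem _
  | @congr f ts i t' _ ih =>
    have := Tm.evalSLI_fn_update_add c α ts i t'
    have := ih α
    omega

end Rew

namespace ChainOf

variable {α : Type} {ρ : α → α → Prop}

theorem of_succ {m : ℕ} {d : ℕ → α} (h : ChainOf ρ (m + 1) d) : ChainOf ρ m d :=
  fun i hi => h i (by omega)

theorem update_succ {k : ℕ} {e : ℕ → α} (h : ChainOf ρ k e) {b : α} (hb : ρ (e k) b) :
    ChainOf ρ (k + 1) (Function.update e (k + 1) b) := by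
  intro i hi
  rw [Function.update_of_ne (by omega)]
  rcases Nat.lt_succ_iff_lt_or_eq.mp hi with hi | rfl
  · rw [Function.update_of_ne (by omega)]
    exact h i hi
  · rwa [Function.update_self]

end ChainOf

theorem ChainOf.exists_relative_chain {α : Type} {τ ρ σ : α → α → Prop} (φ : α → ℕ) (W : ℕ)
    (hτ : ∀ a b, τ a b → ρ a b ∨ σ a b) (hρ : ∀ a b, ρ a b → φ b ≤ φ a + W)
    (hσ : ∀ a b, σ a b → φ b < φ a) {m : ℕ} {d : ℕ → α} (hd : ChainOf τ m d) :
    ∃ (k : ℕ) (e : ℕ → α), e 0 = d 0 ∧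
      ChainOf (fun s t => ∃ u v, Relation.ReflTransGen σ s u ∧ ρ u v ∧
        Relation.ReflTransGen σ v t) k e ∧
      Relation.ReflTransGen σ (e k) (d m) ∧ m + φ (d m) ≤ k * (1 + W) + φ (d 0) := by
  induction m with
  | zero => exact ⟨0, d, rfl, fun i hi => absurd hi (Nat.not_lt_zero i), .refl, by simp⟩
  | succ m ih =>
    obtain ⟨k, e, he0, he, hek, hle⟩ := ih hd.of_succ
    rcases hτ _ _ (hd m (by omega)) with hstep | hstep
    · refine ⟨k + 1, Function.update e (k + 1) (d (m + 1)), ?_,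
        he.update_succ ⟨d m, d (m + 1), hek, hstep, .refl⟩, ?_, ?_⟩
      · rwa [Function.update_of_ne (by omega)]
      · rw [Function.update_self]
      · have := hρ _ _ hstep
        rw [add_one_mul (α := ℕ)]
        omega
    · exact ⟨k, e, he0, he, hek.tail hstep, by have := hσ _ _ hstep; omega⟩

theorem relative_to_total_bound_general {F : Type} [Fintype F] {ar : F → ℕ} (c : F → ℕ)
    (R S : Finset (Tm F ar ℕ × Tm F ar ℕ))
    (hSdec : ∀ p ∈ S, ∀ α : ℕ → ℕ, Tm.evalSLI c α p.2 < Tm.evalSLI c α p.1)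
    (hnondup : ∀ p ∈ R, ∀ x : ℕ, Tm.count x p.2 ≤ Tm.count x p.1)
    (t : Tm F ar ℕ)
    (N : ℕ)
    (hN : ∀ (m : ℕ) (d : ℕ → Tm F ar ℕ), d 0 = t →
      ChainOf (RelRew (↑R : Set (Tm F ar ℕ × Tm F ar ℕ)) ↑S) m d → m ≤ N) :
    ∀ (m : ℕ) (d : ℕ → Tm F ar ℕ), d 0 = t →
      ChainOf (Rew ((↑R : Set (Tm F ar ℕ × Tm F ar ℕ)) ∪ ↑S)) m d →
      m ≤ (1 + R.sup (fun p => Tm.evalSLI c (fun _ => 0) p.2 -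
              Tm.evalSLI c (fun _ => 0) p.1)) * N +
           (Finset.univ.sup c) * Tm.size t := by
  intro m d hd0 hd
  set W := R.sup fun p => Tm.evalSLI c (fun _ => 0) p.2 - Tm.evalSLI c (fun _ => 0) p.1
  have hR (p) (hp : p ∈ R) (α : ℕ → ℕ) : Tm.evalSLI c α p.2 + 0 ≤ Tm.evalSLI c α p.1 + W :=
    (Tm.evalSLI_le_of_count_le c (hnondup p hp) α).trans
      (Nat.add_le_add_left (Finset.le_sup (f := fun p : Tm F ar ℕ × Tm F ar ℕ =>
        Tm.evalSLI c (fun _ => 0) p.2 - Tm.evalSLI c (fun _ => 0) p.1) hp) _)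
  obtain ⟨k, e, he0, he, -, hle⟩ := hd.exists_relative_chain (Tm.evalSLI c fun _ => 0) W
    (fun _ _ => Rew.union_cases) (fun _ _ h => Rew.evalSLI_add_le c hR h _)
    (fun _ _ h => Rew.evalSLI_add_le (a := 1) (b := 0) c hSdec h _)
  have hk : k ≤ N := hN k e (he0.trans hd0) he
  have ht := Tm.evalSLI_zero_le_mul_size c (fun f => Finset.le_sup (Finset.mem_univ f)) t
  rw [hd0] at hle
  calc m ≤ k * (1 + W) + Tm.evalSLI c (fun _ => 0) t := by omega
    _ ≤ (1 + W) * N + Finset.univ.sup c * t.size := by rw [mul_comm]; gcongr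

/-- Let `R`, `S` be finite TRSs over a common finite signature, `A` a
strongly linear interpretation that strictly orients every rule of `S` (for every
assignment), and `R` non-duplicating.  Then for every `→_{R∪S}`-terminating term `t`:
if every `→_{R/S}`-derivation from `t` has length at most `N`, then every
`→_{R∪S}`-derivation from `t` has length at most `(1 + WG(A,R))·N + M_A·|t|`. -/
theorem relative_to_total_bound {F : Type} [Fintype F] {ar : F → ℕ} (c : F → ℕ)
    (R S : Finset (Tm F ar ℕ × Tm F ar ℕ))
    (hR : IsTRS (↑R : Set (Tm F ar ℕ × Tm F ar ℕ)))
    (hS : IsTRS (↑S : Set (Tm F ar ℕ × Tm F ar ℕ)))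
    (hSdec : ∀ p ∈ S, ∀ α : ℕ → ℕ, Tm.evalSLI c α p.2 < Tm.evalSLI c α p.1)
    (hnondup : ∀ p ∈ R, ∀ x : ℕ, Tm.count x p.2 ≤ Tm.count x p.1)
    (t : Tm F ar ℕ)
    (hterm : ¬ ∃ d : ℕ → Tm F ar ℕ, d 0 = t ∧
      ∀ i, Rew ((↑R : Set (Tm F ar ℕ × Tm F ar ℕ)) ∪ ↑S) (d i) (d (i + 1)))
    (N : ℕ)
    (hN : ∀ (m : ℕ) (d : ℕ → Tm F ar ℕ), d 0 = t →
      ChainOf (RelRew (↑R : Set (Tm F ar ℕ × Tm F ar ℕ)) ↑S) m d → m ≤ N) :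
    ∀ (m : ℕ) (d : ℕ → Tm F ar ℕ), d 0 = t →
      ChainOf (Rew ((↑R : Set (Tm F ar ℕ × Tm F ar ℕ)) ∪ ↑S)) m d →
      m ≤ (1 + R.sup (fun p => Tm.evalSLI c (fun _ => 0) p.2 -
              Tm.evalSLI c (fun _ => 0) p.1)) * N +
           (Finset.univ.sup c) * Tm.size t :=
  relative_to_total_bound_general c R S hSdec hnondup t N hN
end
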